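/- arXiv:1908.01397 — 2 statements merged into one kernel-verified Lean document; each statement's English description precedes it below -/
import Mathlib

section
/- Let f be a bi-starlike function of order 0, i.e. f ∈ S*_Σ(0). Then the pre-Schwarzian norm of f satisfies ||f|| ≤ 6. -/
open Metric Set Complex Filter

noncomputable def moeb (c z : ℂ) : ℂ := (c - z) / (1 - (starRingEnd ℂ) c * z)

lemma moeb_denom_ne {c z : ℂ} (hc : ‖c‖ < 1) (hz : ‖z‖ < 1) :
    1 - (starRingEnd ℂ) c * z ≠ 0 := by
  intro h
  have h2 : ‖(starRingEnd ℂ) c * z‖ < 1 := by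
    rw [norm_mul, RCLike.norm_conj]
    nlinarith [norm_nonneg c, norm_nonneg z]
  have h3 : (starRingEnd ℂ) c * z = 1 := by linear_combination -h
  rw [h3] at h2; simp at h2

lemma normSq_moeb_key (c z : ℂ) :
    Complex.normSq (1 - (starRingEnd ℂ) c * z) - Complex.normSq (c - z)
      = (1 - Complex.normSq c) * (1 - Complex.normSq z) := by
  simp [Complex.normSq_apply, Complex.mul_re, Complex.mul_im, Complex.sub_re, Complex.sub_im,
    Complex.conj_re, Complex.conj_im, Complex.one_re, Complex.one_im]
  ring

lemma moeb_maps {c z : ℂ} (hc : ‖c‖ < 1) (hz : ‖z‖ < 1) : ‖moeb c z‖ < 1 := by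
  have hd := moeb_denom_ne hc hz
  have hkey := normSq_moeb_key c z
  have hc2 : Complex.normSq c < 1 := by
    rw [Complex.normSq_eq_norm_sq]; nlinarith [norm_nonneg c]
  have hz2 : Complex.normSq z < 1 := by
    rw [Complex.normSq_eq_norm_sq]; nlinarith [norm_nonneg z]
  have hlt : Complex.normSq (c - z) < Complex.normSq (1 - (starRingEnd ℂ) c * z) := by
    nlinarith [Complex.normSq_nonneg c, Complex.normSq_nonneg z]
  have hnorm : ‖c - z‖ < ‖1 - (starRingEnd ℂ) c * z‖ := by
    have := Complex.normSq_eq_norm_sq (c - z)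
    have := Complex.normSq_eq_norm_sq (1 - (starRingEnd ℂ) c * z)
    nlinarith [norm_nonneg (c - z), norm_nonneg (1 - (starRingEnd ℂ) c * z)]
  rw [moeb, norm_div]
  rw [div_lt_one (lt_of_le_of_lt (norm_nonneg _) hnorm)]
  exact hnorm

lemma moeb_hasDerivAt {c z : ℂ} (h : 1 - (starRingEnd ℂ) c * z ≠ 0) :
    HasDerivAt (moeb c) (((starRingEnd ℂ) c * c - 1) / (1 - (starRingEnd ℂ) c * z) ^ 2) z := by
  have h1 : HasDerivAt (fun w : ℂ => c - w) (-1) z := by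
    simpa using (hasDerivAt_id z).const_sub c
  have h2 : HasDerivAt (fun w : ℂ => 1 - (starRingEnd ℂ) c * w) (-(starRingEnd ℂ) c) z := by
    simpa using ((hasDerivAt_id z).const_mul ((starRingEnd ℂ) c)).const_sub 1
  have : HasDerivAt (fun w => (c - w) / (1 - (starRingEnd ℂ) c * w)) _ z := h1.div h2 h
  convert this using 1
  rfl
  ring

lemma moeb_zero (c : ℂ) : moeb c 0 = c := by simp [moeb]

lemma moeb_self (c : ℂ) : moeb c c = 0 := by simp [moeb]

lemma schwarz_pick {ω : ℂ → ℂ} (hd : DifferentiableOn ℂ ω (ball 0 1))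
    (hm : MapsTo ω (ball 0 1) (ball 0 1)) {a : ℂ} (ha : a ∈ ball (0:ℂ) 1) :
    ‖deriv ω a‖ * (1 - ‖a‖ ^ 2) ≤ 1 - ‖ω a‖ ^ 2 := by
  have ha' : ‖a‖ < 1 := by simpa [mem_ball, dist_eq_norm] using ha
  set b := ω a with hb
  have hb' : ‖b‖ < 1 := by simpa [mem_ball, dist_eq_norm] using hm ha
  -- G = moeb b ∘ ω ∘ moeb a
  set G : ℂ → ℂ := fun z => moeb b (ω (moeb a z)) with hG
  have hmapsa : ∀ z ∈ ball (0:ℂ) 1, moeb a z ∈ ball (0:ℂ) 1 := by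
    intro z hz
    have : ‖z‖ < 1 := by simpa [mem_ball, dist_eq_norm] using hz
    simpa [mem_ball, dist_eq_norm] using moeb_maps ha' this
  have hGdiff : DifferentiableOn ℂ G (ball 0 1) := by
    intro z hz
    have hz' : ‖z‖ < 1 := by simpa [mem_ball, dist_eq_norm] using hz
    have h1 : DifferentiableAt ℂ (moeb a) z := (moeb_hasDerivAt (moeb_denom_ne ha' hz')).differentiableAt
    have hmz := hmapsa z hz
    have h2 : DifferentiableAt ℂ ω (moeb a z) := hd.differentiableAt (isOpen_ball.mem_nhds hmz)
    have hwz : ‖ω (moeb a z)‖ < 1 := by simpa [mem_ball, dist_eq_norm] using hm hmz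
    have h3 : DifferentiableAt ℂ (moeb b) (ω (moeb a z)) :=
      (moeb_hasDerivAt (moeb_denom_ne hb' hwz)).differentiableAt
    exact ((h3.comp z (h2.comp z h1))).differentiableWithinAt
  have hGmaps : MapsTo G (ball 0 1) (ball 0 1) := by
    intro z hz
    have hmz := hmapsa z hz
    have hwz : ‖ω (moeb a z)‖ < 1 := by simpa [mem_ball, dist_eq_norm] using hm hmz
    simpa [mem_ball, dist_eq_norm, hG] using moeb_maps hb' hwz
  have hG0 : G 0 = 0 := by simp [hG, moeb_zero, ← hb, moeb_self]
  have hbound : ‖deriv G 0‖ ≤ 1 :=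
    Complex.norm_deriv_le_one_of_mapsTo_ball hGdiff (by rw [hG0]; exact hGmaps.mono_right ball_subset_closedBall) one_pos
  -- compute deriv G 0
  have hda : HasDerivAt (moeb a) ((starRingEnd ℂ) a * a - 1) 0 := by
    have := moeb_hasDerivAt (c := a) (z := 0) (by simpa using moeb_denom_ne ha' (by norm_num : ‖(0:ℂ)‖ < 1))
    simpa using this
  have hω : HasDerivAt ω (deriv ω a) a :=
    (hd.differentiableAt (isOpen_ball.mem_nhds ha)).hasDerivAt
  have hdb : HasDerivAt (moeb b) (((starRingEnd ℂ) b * b - 1) / (1 - (starRingEnd ℂ) b * b) ^ 2) b :=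
    moeb_hasDerivAt (by
      intro h
      have : Complex.normSq b = 1 := by
        have h3 : (starRingEnd ℂ) b * b = 1 := by linear_combination -h
        have := Complex.mul_conj b
        calc Complex.normSq b = ((starRingEnd ℂ) b * b).re := by rw [mul_comm, Complex.mul_conj]; simp
          _ = 1 := by rw [h3]; simp
      rw [Complex.normSq_eq_norm_sq] at this
      nlinarith [norm_nonneg b])
  have hωa0 : ω (moeb a 0) = b := by rw [moeb_zero]
  have hGderiv : HasDerivAt G ((((starRingEnd ℂ) b * b - 1) / (1 - (starRingEnd ℂ) b * b) ^ 2)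
      * (deriv ω a * ((starRingEnd ℂ) a * a - 1))) 0 := by
    have h1 : HasDerivAt (fun z => ω (moeb a z)) (deriv ω a * ((starRingEnd ℂ) a * a - 1)) 0 := by
      have hω' : HasDerivAt ω (deriv ω a) (moeb a 0) := by rw [moeb_zero]; exact hω
      exact hω'.comp 0 hda
    have h2 : HasDerivAt (moeb b) (((starRingEnd ℂ) b * b - 1) / (1 - (starRingEnd ℂ) b * b) ^ 2)
        ((fun z => ω (moeb a z)) 0) := by simpa [moeb_zero] using hdb
    exact h2.comp 0 h1
  have hderivG : deriv G 0 = (((starRingEnd ℂ) b * b - 1) / (1 - (starRingEnd ℂ) b * b) ^ 2)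
      * (deriv ω a * ((starRingEnd ℂ) a * a - 1)) := hGderiv.deriv
  -- norms
  have hcc : ∀ c : ℂ, ‖c‖ < 1 → ‖(starRingEnd ℂ) c * c - 1‖ = 1 - ‖c‖ ^ 2 := by
    intro c hc
    have : (starRingEnd ℂ) c * c - 1 = ((Complex.normSq c - 1 : ℝ) : ℂ) := by
      rw [mul_comm, Complex.mul_conj]; push_cast; ring
    rw [this, Complex.norm_real, Real.norm_eq_abs, Complex.normSq_eq_norm_sq]
    rw [abs_of_nonpos (by nlinarith [norm_nonneg c] : ‖c‖^2 - 1 ≤ 0)]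
    ring
  have hden : ‖1 - (starRingEnd ℂ) b * b‖ = 1 - ‖b‖ ^ 2 := by
    have : (1 : ℂ) - (starRingEnd ℂ) b * b = ((1 - Complex.normSq b : ℝ) : ℂ) := by
      rw [mul_comm, Complex.mul_conj]; push_cast; ring
    rw [this, Complex.norm_real, Real.norm_eq_abs, Complex.normSq_eq_norm_sq]
    rw [_root_.abs_of_nonneg (by nlinarith [norm_nonneg b] : (0:ℝ) ≤ 1 - ‖b‖^2)]
  have hb2 : 0 < 1 - ‖b‖ ^ 2 := by nlinarith [norm_nonneg b]
  have habs : ‖deriv G 0‖ * (1 - ‖b‖ ^ 2) = ‖deriv ω a‖ * (1 - ‖a‖ ^ 2) := by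
    rw [hderivG, norm_mul, norm_mul, norm_div, norm_pow, hden, hcc b hb', hcc a ha']
    rw [div_mul_eq_mul_div, div_mul_eq_mul_div, div_eq_iff (pow_ne_zero 2 hb2.ne')]
    ring
  nlinarith [norm_nonneg (deriv G 0)]

open Metric Set Complex Filter Topology
/-- If `f` is bi-starlike of order `0`, then its pre-Schwarzian norm is at most `6`. -/
theorem preSchwarzian_norm_bound_bi_starlike_order_zero
    (f g : ℂ → ℂ)
    (hf : AnalyticOnNhd ℂ f (Metric.ball (0:ℂ) 1))
    (hf0 : f 0 = 0) (hf'0 : deriv f 0 = 1)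
    (hinj : Set.InjOn f (Metric.ball (0:ℂ) 1))
    (hg : AnalyticOnNhd ℂ g (Metric.ball (0:ℂ) 1))
    (hg0 : g 0 = 0)
    (hfg : ∀ w : ℂ, ‖w‖ < 1/4 → f (g w) = w)
    (hstar : ∀ z : ℂ, ‖z‖ < 1 → z ≠ 0 → 0 < (z * deriv f z / f z).re)
    (hstar' : ∀ w : ℂ, ‖w‖ < 1 → w ≠ 0 → 0 < (w * deriv g w / g w).re) :
    ∀ z : ℂ, ‖z‖ < 1 →
      (1 - ‖z‖ ^ 2) * ‖deriv (deriv f) z / deriv f z‖ ≤ 6 := by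
  clear hinj hg hg0 hfg hstar' g
  have hmem0 : (0:ℂ) ∈ ball (0:ℂ) 1 := by simp
  have hball : ∀ z : ℂ, z ∈ ball (0:ℂ) 1 ↔ ‖z‖ < 1 := by
    intro z; simp [mem_ball, dist_eq_norm]
  -- f does not vanish away from 0
  have hfne : ∀ z : ℂ, ‖z‖ < 1 → z ≠ 0 → f z ≠ 0 := by
    intro z hz hz0 hfz
    have := hstar z hz hz0
    rw [hfz, div_zero] at this
    simp at this
  -- the function h = f z / z
  set h : ℂ → ℂ := dslope f 0 with hh
  have h0 : h 0 = 1 := by simp [hh, dslope_same, hf'0]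
  have hne0 : ∀ z : ℂ, z ≠ 0 → h z = f z / z := by
    intro z hz
    simp [hh, dslope_of_ne f hz, slope_def_field, hf0]
  have han : AnalyticOnNhd ℂ h (ball (0:ℂ) 1) := by
    intro z hz
    rcases eq_or_ne z 0 with rfl | hz0
    · obtain ⟨pp, hpp⟩ := hf 0 hmem0
      exact ⟨pp.fslope, hpp.has_fpower_series_dslope_fslope⟩
    · have h1 : AnalyticAt ℂ (fun w => f w / w) z :=
        (hf z hz).div analyticAt_id hz0
      apply h1.congr
      filter_upwards [isOpen_compl_singleton.mem_nhds hz0] with w hw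
      exact (hne0 w hw).symm
  have hhne : ∀ z ∈ ball (0:ℂ) 1, h z ≠ 0 := by
    intro z hz
    rcases eq_or_ne z 0 with rfl | hz0
    · rw [h0]; exact one_ne_zero
    · rw [hne0 z hz0]
      exact div_ne_zero (hfne z ((hball z).1 hz) hz0) hz0
  -- p = z f' / f with removable singularity
  set p : ℂ → ℂ := fun z => deriv f z / h z with hpdef
  have hpan : AnalyticOnNhd ℂ p (ball (0:ℂ) 1) := fun z hz =>
    ((hf.deriv z hz).div (han z hz) (hhne z hz))
  have hp0 : p 0 = 1 := by simp [hpdef, hf'0, h0]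
  have hpval : ∀ z : ℂ, ‖z‖ < 1 → z ≠ 0 → p z = z * deriv f z / f z := by
    intro z hz1 hz0
    rw [hpdef]
    simp only
    rw [hne0 z hz0]
    rw [div_div_eq_mul_div, mul_comm]
  have hpre : ∀ z ∈ ball (0:ℂ) 1, 0 < (p z).re := by
    intro z hz
    rcases eq_or_ne z 0 with rfl | hz0
    · rw [hp0]; norm_num
    · rw [hpval z ((hball z).1 hz) hz0]; exact hstar z ((hball z).1 hz) hz0
  have hpne : ∀ z ∈ ball (0:ℂ) 1, p z ≠ 0 := by
    intro z hz h'
    have := hpre z hz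
    rw [h'] at this; simp at this
  have hp1ne : ∀ z ∈ ball (0:ℂ) 1, p z + 1 ≠ 0 := by
    intro z hz h'
    have := hpre z hz
    have : (p z + 1).re = 0 := by rw [h']; simp
    simp only [Complex.add_re, Complex.one_re] at this
    linarith [hpre z hz]
  -- ω
  set ω : ℂ → ℂ := fun z => (p z - 1) / (p z + 1) with hωdef
  have hωan : AnalyticOnNhd ℂ ω (ball (0:ℂ) 1) := fun z hz =>
    ((hpan z hz).sub analyticAt_const).div ((hpan z hz).add analyticAt_const) (hp1ne z hz)
  have hω0 : ω 0 = 0 := by simp [hωdef, hp0]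
  have hωlt : ∀ z ∈ ball (0:ℂ) 1, ‖ω z‖ < 1 := by
    intro z hz
    have h1 := hp1ne z hz
    have h2 := hpre z hz
    rw [hωdef]
    simp only [norm_div]
    rw [div_lt_one (by simpa [norm_pos_iff] using h1)]
    have key : Complex.normSq (p z + 1) - Complex.normSq (p z - 1) = 4 * (p z).re := by
      simp [Complex.normSq_apply, Complex.add_re, Complex.add_im, Complex.sub_re, Complex.sub_im]
      ring
    have e1 : ‖p z - 1‖ ^ 2 = Complex.normSq (p z - 1) := by
      rw [Complex.normSq_eq_norm_sq]
    have e2 : ‖p z + 1‖ ^ 2 = Complex.normSq (p z + 1) := by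
      rw [Complex.normSq_eq_norm_sq]
    nlinarith [norm_nonneg (p z - 1), norm_nonneg (p z + 1)]
  have hmaps : MapsTo ω (ball (0:ℂ) 1) (ball (0:ℂ) 1) := by
    intro z hz; rw [hball]; exact hωlt z hz
  have hωd : DifferentiableOn ℂ ω (ball (0:ℂ) 1) := hωan.differentiableOn
  have schwarz : ∀ z : ℂ, ‖z‖ < 1 → ‖ω z‖ ≤ ‖z‖ := by
    intro z hz
    have := Complex.norm_le_norm_of_mapsTo_ball hωd (hmaps.mono_right ball_subset_closedBall) hω0
      (by exact hz)
    simpa using this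
  have hden : ∀ z ∈ ball (0:ℂ) 1, (1:ℂ) - ω z ≠ 0 := by
    intro z hz h'
    have h1 : ω z = 1 := by linear_combination -h'
    have := hωlt z hz
    rw [h1] at this; simp at this
  have hpω : ∀ z ∈ ball (0:ℂ) 1, p z * (1 - ω z) = 1 + ω z := by
    intro z hz
    rw [hωdef]
    field_simp [hp1ne z hz]
    ring
  -- re p in terms of ω
  have hrep : ∀ z ∈ ball (0:ℂ) 1,
      (p z).re * Complex.normSq (1 - ω z) = 1 - Complex.normSq (ω z) := by
    intro z hz
    have hpz : p z = (1 + ω z) / (1 - ω z) := by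
      rw [eq_div_iff (hden z hz)]; exact hpω z hz
    have hW : Complex.normSq (1 - ω z) ≠ 0 := by
      simpa [Complex.normSq_eq_zero] using hden z hz
    rw [hpz, Complex.div_re, ← add_div, div_mul_cancel₀ _ hW]
    simp [Complex.normSq_apply, Complex.add_re, Complex.add_im, Complex.sub_re, Complex.sub_im,
      Complex.one_re, Complex.one_im]
    ring
  -- key derivative bound
  have hkey : ∀ z ∈ ball (0:ℂ) 1, ‖deriv p z‖ * (1 - ‖z‖ ^ 2) ≤ 2 * (p z).re := by
    intro z hz
    have hz1 : ‖z‖ < 1 := (hball z).1 hz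
    have hSP := schwarz_pick hωd hmaps hz
    have hdp : DifferentiableAt ℂ p z := (hpan z hz).differentiableAt
    have hdω : DifferentiableAt ℂ ω z := (hωan z hz).differentiableAt
    have hev : (fun x => p x * (1 - ω x)) =ᶠ[𝓝 z] (fun x => 1 + ω x) := by
      filter_upwards [isOpen_ball.mem_nhds hz] with x hx
      exact hpω x hx
    have e1 : deriv (fun x => p x * (1 - ω x)) z
        = deriv p z * (1 - ω z) + p z * (-deriv ω z) := by
      rw [deriv_fun_mul hdp ((differentiable_const (1:ℂ)).differentiableAt.fun_sub hdω)]
      congr 1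
      rw [deriv_const_sub]
    have e2 : deriv (fun x => 1 + ω x) z = deriv ω z := by
      rw [deriv_const_add]
    have e3 : deriv p z * (1 - ω z) + p z * (-deriv ω z) = deriv ω z := by
      rw [← e1, ← e2]
      exact hev.deriv_eq
    have e4 : deriv p z * (1 - ω z) = deriv ω z * (1 + p z) := by
      linear_combination e3
    have e5 : (1 + p z) * (1 - ω z) = 2 := by
      linear_combination hpω z hz
    -- norms
    have n4 : ‖deriv p z‖ * ‖1 - ω z‖ = ‖deriv ω z‖ * ‖1 + p z‖ := by
      rw [← norm_mul, ← norm_mul, e4]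
    have n5 : ‖1 + p z‖ * ‖1 - ω z‖ = 2 := by
      rw [← norm_mul, e5]
      simp
    have hnw : 0 < ‖1 - ω z‖ := by
      rw [norm_pos_iff]; exact hden z hz
    have hnw2 : ‖1 - ω z‖ ^ 2 = Complex.normSq (1 - ω z) := by
      rw [Complex.normSq_eq_norm_sq]
    have hωn2 : ‖ω z‖ ^ 2 = Complex.normSq (ω z) := by
      rw [Complex.normSq_eq_norm_sq]
    have hrp := hrep z hz
    -- ‖A‖ (1-‖z‖²) ‖1-w‖² = 2 ‖ω'‖ (1-‖z‖²) ≤ 2 (1-‖w‖²) = 2 re P ‖1-w‖²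
    have step : ‖deriv p z‖ * (1 - ‖z‖ ^ 2) * ‖1 - ω z‖ ^ 2
        ≤ 2 * (p z).re * ‖1 - ω z‖ ^ 2 := by
      have n6 : ‖deriv p z‖ * ‖1 - ω z‖ ^ 2 = 2 * ‖deriv ω z‖ := by
        calc ‖deriv p z‖ * ‖1 - ω z‖ ^ 2 = (‖deriv p z‖ * ‖1 - ω z‖) * ‖1 - ω z‖ := by ring
          _ = (‖deriv ω z‖ * ‖1 + p z‖) * ‖1 - ω z‖ := by rw [n4]
          _ = ‖deriv ω z‖ * (‖1 + p z‖ * ‖1 - ω z‖) := by ring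
          _ = 2 * ‖deriv ω z‖ := by rw [n5]; ring
      have lhs : ‖deriv p z‖ * (1 - ‖z‖ ^ 2) * ‖1 - ω z‖ ^ 2
          = 2 * (‖deriv ω z‖ * (1 - ‖z‖ ^ 2)) := by
        linear_combination (1 - ‖z‖ ^ 2) * n6
      rw [lhs]
      have rhs : 2 * (p z).re * ‖1 - ω z‖ ^ 2 = 2 * (1 - ‖ω z‖ ^ 2) := by
        rw [hnw2, hωn2]
        linear_combination 2 * hrp
      rw [rhs]
      linarith [hSP]
    have h2 : 0 < ‖1 - ω z‖ ^ 2 := by positivity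
    exact le_of_mul_le_mul_right step h2
  -- the bound on the punctured disc
  have hmain : ∀ z : ℂ, ‖z‖ < 1 → z ≠ 0 →
      (1 - ‖z‖ ^ 2) * ‖deriv (deriv f) z / deriv f z‖ ≤ 4 + 2 * ‖z‖ := by
    intro z hz1 hz0
    have hz : z ∈ ball (0:ℂ) 1 := (hball z).2 hz1
    have hfz := hfne z hz1 hz0
    have hPne := hpne z hz
    have hf'ne : deriv f z ≠ 0 := by
      intro hc
      apply hPne
      rw [hpval z ((hball z).1 hz) hz0, hc]
      simp
    -- derivative decomposition
    have hdp : DifferentiableAt ℂ p z := (hpan z hz).differentiableAt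
    have hdh : DifferentiableAt ℂ h z := (han z hz).differentiableAt
    have hevf : deriv f =ᶠ[𝓝 z] (fun x => p x * h x) := by
      filter_upwards [isOpen_ball.mem_nhds hz] with x hx
      rw [hpdef]
      simp only
      rw [div_mul_cancel₀ _ (hhne x hx)]
    have hdd : deriv (deriv f) z = deriv p z * h z + p z * deriv h z := by
      rw [hevf.deriv_eq, deriv_fun_mul hdp hdh]
    -- deriv of h away from 0
    have hevh : h =ᶠ[𝓝 z] (fun x => f x / x) := by
      filter_upwards [isOpen_compl_singleton.mem_nhds hz0] with x hx
      exact hne0 x hx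
    have hdf : DifferentiableAt ℂ f z := (hf z hz).differentiableAt
    have hdh' : deriv h z = (deriv f z * z - f z * 1) / z ^ 2 := by
      rw [hevh.deriv_eq, deriv_fun_div hdf differentiableAt_fun_id hz0]
      simp
    have hPz : p z = z * deriv f z / f z := hpval z hz1 hz0
    have hratio : deriv (deriv f) z / deriv f z = deriv p z / p z + (p z - 1) / z := by
      rw [hdd, hdh', hne0 z hz0, hPz]
      field_simp [hz0, hfz, hf'ne]
    have hnorm : ‖deriv (deriv f) z / deriv f z‖ ≤ ‖deriv p z‖ / ‖p z‖ + ‖p z - 1‖ / ‖z‖ := by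
      calc ‖deriv (deriv f) z / deriv f z‖ = ‖deriv p z / p z + (p z - 1) / z‖ := by rw [hratio]
        _ ≤ ‖deriv p z / p z‖ + ‖(p z - 1) / z‖ := norm_add_le _ _
        _ = ‖deriv p z‖ / ‖p z‖ + ‖p z - 1‖ / ‖z‖ := by rw [norm_div (deriv p z) (p z), norm_div (p z - 1) z]
    have hPpos : 0 < ‖p z‖ := norm_pos_iff.2 hPne
    have hzpos : 0 < ‖z‖ := norm_pos_iff.2 hz0
    have t1 : (1 - ‖z‖ ^ 2) * (‖deriv p z‖ / ‖p z‖) ≤ 2 := by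
      have hk := hkey z hz
      have hre : (p z).re ≤ ‖p z‖ := by
        exact Complex.re_le_norm (p z)
      rw [mul_comm, div_mul_eq_mul_div, div_le_iff₀ hPpos]
      linarith
    have t2 : (1 - ‖z‖ ^ 2) * (‖p z - 1‖ / ‖z‖) ≤ 2 * (1 + ‖z‖) := by
      have hP1 : (p z - 1) * (1 - ω z) = 2 * ω z := by
        linear_combination hpω z hz
      have n1 : ‖p z - 1‖ * ‖1 - ω z‖ = 2 * ‖ω z‖ := by
        rw [← norm_mul, hP1, norm_mul]
        simp
      have n2 : 1 - ‖ω z‖ ≤ ‖1 - ω z‖ := by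
        have := norm_sub_norm_le (1:ℂ) (ω z)
        simpa using this
      have n3 : ‖ω z‖ ≤ ‖z‖ := schwarz z hz1
      have n4 : ‖p z - 1‖ * (1 - ‖z‖) ≤ 2 * ‖z‖ := by
        have h5 : ‖p z - 1‖ * (1 - ‖z‖) ≤ ‖p z - 1‖ * ‖1 - ω z‖ := by
          have : 1 - ‖z‖ ≤ ‖1 - ω z‖ := by linarith
          exact mul_le_mul_of_nonneg_left this (norm_nonneg _)
        rw [n1] at h5
        linarith
      rw [mul_comm, div_mul_eq_mul_div, div_le_iff₀ hzpos]
      nlinarith [norm_nonneg (p z - 1), norm_nonneg z]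
    have hz2 : (0:ℝ) ≤ 1 - ‖z‖ ^ 2 := by nlinarith [norm_nonneg z]
    calc (1 - ‖z‖ ^ 2) * ‖deriv (deriv f) z / deriv f z‖
        ≤ (1 - ‖z‖ ^ 2) * (‖deriv p z‖ / ‖p z‖ + ‖p z - 1‖ / ‖z‖) :=
          mul_le_mul_of_nonneg_left hnorm hz2
      _ = (1 - ‖z‖ ^ 2) * (‖deriv p z‖ / ‖p z‖) + (1 - ‖z‖ ^ 2) * (‖p z - 1‖ / ‖z‖) := by ring
      _ ≤ 2 + 2 * (1 + ‖z‖) := by linarith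
      _ = 4 + 2 * ‖z‖ := by ring
  -- conclusion
  intro z hz
  rcases eq_or_ne z 0 with rfl | hz0
  · have hF : ContinuousAt (fun x => deriv (deriv f) x / deriv f x) 0 := by
      have h1 : ContinuousAt (deriv (deriv f)) 0 := ((hf.deriv).deriv 0 hmem0).continuousAt
      have h2 : ContinuousAt (deriv f) 0 := ((hf.deriv) 0 hmem0).continuousAt
      exact h1.div h2 (by rw [hf'0]; exact one_ne_zero)
    have ht1 : Tendsto (fun x : ℂ => ‖deriv (deriv f) x / deriv f x‖) (𝓝[≠] (0:ℂ))
        (𝓝 ‖deriv (deriv f) 0 / deriv f 0‖) :=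
      (hF.norm.tendsto).mono_left nhdsWithin_le_nhds
    have ht2 : Tendsto (fun x : ℂ => (4 + 2 * ‖x‖) / (1 - ‖x‖ ^ 2)) (𝓝[≠] (0:ℂ)) (𝓝 4) := by
      have hc : ContinuousAt (fun x : ℂ => (4 + 2 * ‖x‖) / (1 - ‖x‖ ^ 2)) 0 := by
        apply ContinuousAt.div
        · fun_prop
        · fun_prop
        · norm_num
      have h4 : (4 + 2 * ‖(0:ℂ)‖) / (1 - ‖(0:ℂ)‖ ^ 2) = 4 := by norm_num
      simpa [h4] using hc.tendsto.mono_left nhdsWithin_le_nhds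
    have hev2 : ∀ᶠ x in 𝓝[≠] (0:ℂ),
        ‖deriv (deriv f) x / deriv f x‖ ≤ (4 + 2 * ‖x‖) / (1 - ‖x‖ ^ 2) := by
      filter_upwards [self_mem_nhdsWithin,
        mem_nhdsWithin_of_mem_nhds (ball_mem_nhds (0:ℂ) one_pos)] with x hx0 hxb
      have hx0' : x ≠ 0 := hx0
      have hx1 : ‖x‖ < 1 := (hball x).1 hxb
      have hbd := hmain x hx1 hx0'
      rw [le_div_iff₀ (by nlinarith [norm_nonneg x])]
      linarith
    have hle : ‖deriv (deriv f) 0 / deriv f 0‖ ≤ 4 :=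
      le_of_tendsto_of_tendsto ht1 ht2 hev2
    have h00 : ‖(0:ℂ)‖ = (0:ℝ) := norm_zero
    rw [h00]
    have h01 : (1:ℝ) - (0:ℝ) ^ 2 = 1 := by norm_num
    rw [h01, one_mul]
    linarith
  · have := hmain z hz hz0
    linarith
end

section
/- Let 0 < α < 1/2, let f ∈ A be locally univalent on Δ with f(z) ≠ 0 for z ∈ Δ∖{0}, and suppose there exists a Schwarz function φ such that f'(z)/f(z) = (1 − φ(z))/(z(1 + (1−2α)φ(z))) for all z ∈ Δ∖{0}. Then the pre-Schwarzian norm of f satisfies ||f|| ≤ 4(1−α)/α. -/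
open Metric Complex
set_option maxHeartbeats 1000000

section AuxPre

lemma aux_one_add_ne (u : ℂ) (hu : ‖u‖ < 1) : 1 + u ≠ 0 := by
  intro h
  have : u = -1 := by linear_combination h
  rw [this] at hu; simp at hu

lemma aux_normSq_diff (a w : ℂ) :
    Complex.normSq (1 + (starRingEnd ℂ) a * w) - Complex.normSq (w + a)
      = (1 - Complex.normSq a) * (1 - Complex.normSq w) := by
  simp only [Complex.normSq_apply, Complex.add_re, Complex.add_im, Complex.mul_re,
    Complex.mul_im, Complex.conj_re, Complex.conj_im, Complex.one_re, Complex.one_im]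
  ring

lemma aux_mobius_lt_one (a w : ℂ) (ha : ‖a‖ < 1) (hw : ‖w‖ < 1) :
    ‖(w + a) / (1 + (starRingEnd ℂ) a * w)‖ < 1 := by
  have hden : (1 : ℂ) + (starRingEnd ℂ) a * w ≠ 0 := by
    apply aux_one_add_ne
    rw [norm_mul, RCLike.norm_conj]
    nlinarith [norm_nonneg a, norm_nonneg w]
  rw [norm_div, div_lt_one (norm_pos_iff.mpr hden)]
  apply lt_of_pow_lt_pow_left₀ 2 (norm_nonneg _)
  have h1 : ‖w + a‖ ^ 2 = Complex.normSq (w + a) := by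
    rw [Complex.normSq_eq_norm_sq]
  have h2 : ‖1 + (starRingEnd ℂ) a * w‖ ^ 2 = Complex.normSq (1 + (starRingEnd ℂ) a * w) := by
    rw [Complex.normSq_eq_norm_sq]
  have h3 := aux_normSq_diff a w
  have ha2 : Complex.normSq a < 1 := by
    rw [Complex.normSq_eq_norm_sq]; nlinarith [norm_nonneg a]
  have hw2 : Complex.normSq w < 1 := by
    rw [Complex.normSq_eq_norm_sq]; nlinarith [norm_nonneg w]
  rw [h1, h2]
  nlinarith

lemma aux_blaschke_lt_one (a u : ℂ) (ha : ‖a‖ < 1) (hu : ‖u‖ < 1) :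
    ‖(u - a) / (1 - (starRingEnd ℂ) a * u)‖ < 1 := by
  have := aux_mobius_lt_one (-a) u (by rwa [norm_neg]) hu
  simpa [sub_eq_add_neg, neg_mul] using this

lemma aux_blaschke_den_ne (a u : ℂ) (ha : ‖a‖ < 1) (hu : ‖u‖ < 1) :
    (1 : ℂ) - (starRingEnd ℂ) a * u ≠ 0 := by
  have := aux_one_add_ne (-((starRingEnd ℂ) a * u)) (by
    rw [norm_neg, norm_mul, RCLike.norm_conj]; nlinarith [norm_nonneg a, norm_nonneg u])
  simpa [sub_eq_add_neg] using this

lemma aux_schwarz_pick {φ : ℂ → ℂ}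
    (hd : ∀ w : ℂ, ‖w‖ < 1 → DifferentiableAt ℂ φ w)
    (hm : ∀ w : ℂ, ‖w‖ < 1 → ‖φ w‖ < 1) {z : ℂ} (hz : ‖z‖ < 1) :
    ‖deriv φ z‖ * (1 - ‖z‖ ^ 2) ≤ 1 - ‖φ z‖ ^ 2 := by
  set a := φ z with ha_def
  have haz : ‖a‖ < 1 := hm z hz
  set m : ℂ → ℂ := fun w => (w + z) / (1 + (starRingEnd ℂ) z * w) with hm_def
  set g : ℂ → ℂ := fun w => (φ (m w) - a) / (1 - (starRingEnd ℂ) a * φ (m w)) with hg_def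
  have hden : ∀ w : ℂ, ‖w‖ < 1 → (1 : ℂ) + (starRingEnd ℂ) z * w ≠ 0 := fun w hw => by
    apply aux_one_add_ne
    rw [norm_mul, RCLike.norm_conj]
    nlinarith [norm_nonneg z, norm_nonneg w]
  have hmlt : ∀ w : ℂ, ‖w‖ < 1 → ‖m w‖ < 1 := fun w hw => aux_mobius_lt_one z w hz hw
  have hm0 : m 0 = z := by simp [hm_def]
  -- differentiability of m at any point of the ball
  have hmdiff : ∀ w : ℂ, ‖w‖ < 1 → DifferentiableAt ℂ m w := fun w hw => by
    exact (differentiableAt_id.add_const z).div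
      ((differentiableAt_const 1).add (differentiableAt_id.const_mul _)) (hden w hw)
  have hgdiff : DifferentiableOn ℂ g (ball (0:ℂ) 1) := by
    intro w hw
    rw [mem_ball_zero_iff] at hw
    have h1 : DifferentiableAt ℂ (fun w => φ (m w)) w :=
      (hd (m w) (hmlt w hw)).comp w (hmdiff w hw)
    exact (((h1.sub_const a).div ((h1.const_mul _).const_sub 1)
      (aux_blaschke_den_ne a (φ (m w)) haz (hm (m w) (hmlt w hw))))).differentiableWithinAt
  have hg0 : g 0 = 0 := by simp [hg_def, hm0, ← ha_def]
  have hgmaps : Set.MapsTo g (ball (0:ℂ) 1) (ball (g 0) 1) := by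
    rw [hg0]
    intro w hw
    rw [mem_ball_zero_iff] at hw ⊢
    exact aux_blaschke_lt_one a (φ (m w)) haz (hm (m w) (hmlt w hw))
  -- derivative of g at 0
  have hdm : HasDerivAt m ((1 * (1 + (starRingEnd ℂ) z * 0) - (0 + z) * ((starRingEnd ℂ) z * 1))
      / (1 + (starRingEnd ℂ) z * 0) ^ 2) 0 := by
    exact ((hasDerivAt_id 0).add_const z).div
      (((hasDerivAt_id 0).const_mul ((starRingEnd ℂ) z)).const_add 1) (hden 0 (by norm_num))
  have hdmval : (1 * (1 + (starRingEnd ℂ) z * 0) - (0 + z) * ((starRingEnd ℂ) z * 1))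
      / (1 + (starRingEnd ℂ) z * 0) ^ 2 = 1 - (Complex.normSq z : ℂ) := by
    simp [Complex.mul_conj]
  rw [hdmval] at hdm
  have hφd : HasDerivAt φ (deriv φ z) (m 0) := by rw [hm0]; exact (hd z hz).hasDerivAt
  have hcomp : HasDerivAt (fun w => φ (m w)) (deriv φ z * (1 - (Complex.normSq z : ℂ))) 0 :=
    HasDerivAt.comp 0 hφd hdm
  have hφm0 : φ (m 0) = a := by rw [hm0]
  have hBnum : HasDerivAt (fun u : ℂ => u - a) 1 a := (hasDerivAt_id a).sub_const a
  have hBden : HasDerivAt (fun u : ℂ => 1 - (starRingEnd ℂ) a * u) (-((starRingEnd ℂ) a * 1)) a :=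
    ((hasDerivAt_id a).const_mul ((starRingEnd ℂ) a)).const_sub 1
  have hBne : (1 : ℂ) - (starRingEnd ℂ) a * a ≠ 0 := aux_blaschke_den_ne a a haz haz
  have hB : HasDerivAt (fun u : ℂ => (u - a) / (1 - (starRingEnd ℂ) a * u))
      ((1 * (1 - (starRingEnd ℂ) a * a) - (a - a) * (-((starRingEnd ℂ) a * 1)))
        / (1 - (starRingEnd ℂ) a * a) ^ 2) a := hBnum.div hBden hBne
  have hconj : (starRingEnd ℂ) a * a = (Complex.normSq a : ℂ) := by
    rw [mul_comm, Complex.mul_conj]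
  have hBval : (1 * (1 - (starRingEnd ℂ) a * a) - (a - a) * (-((starRingEnd ℂ) a * 1)))
        / (1 - (starRingEnd ℂ) a * a) ^ 2 = (1 - (Complex.normSq a : ℂ))⁻¹ := by
    rw [hconj]
    have h1 : (1 : ℂ) - (Complex.normSq a : ℂ) ≠ 0 := by rw [← hconj]; exact hBne
    field_simp
    ring
  rw [hBval] at hB
  have hB' : HasDerivAt (fun u : ℂ => (u - a) / (1 - (starRingEnd ℂ) a * u))
      ((1 - (Complex.normSq a : ℂ))⁻¹) (φ (m 0)) := by rwa [hφm0]
  have hg' : HasDerivAt g ((1 - (Complex.normSq a : ℂ))⁻¹ *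
      (deriv φ z * (1 - (Complex.normSq z : ℂ)))) 0 := by
    have := HasDerivAt.comp 0 hB' hcomp; exact this
  have hle := Complex.norm_deriv_le_div_of_mapsTo_ball hgdiff (hgmaps.mono_right ball_subset_closedBall) one_pos
  rw [hg'.deriv] at hle
  -- now extract the real inequality
  have hnz : Complex.normSq z = ‖z‖ ^ 2 := by
    rw [Complex.normSq_eq_norm_sq]
  have hna : Complex.normSq a = ‖a‖ ^ 2 := by
    rw [Complex.normSq_eq_norm_sq]
  have h1 : (1 : ℂ) - (Complex.normSq a : ℂ) = ((1 - ‖a‖ ^ 2 : ℝ) : ℂ) := by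
    rw [hna]; push_cast; ring
  have h2 : (1 : ℂ) - (Complex.normSq z : ℂ) = ((1 - ‖z‖ ^ 2 : ℝ) : ℂ) := by
    rw [hnz]; push_cast; ring
  rw [h1, h2, norm_mul, norm_mul, norm_inv, Complex.norm_real, Complex.norm_real] at hle
  have ha2 : (0:ℝ) < 1 - ‖a‖ ^ 2 := by nlinarith [norm_nonneg a]
  have hz2 : (0:ℝ) ≤ 1 - ‖z‖ ^ 2 := by nlinarith [norm_nonneg z]
  rw [Real.norm_of_nonneg ha2.le, Real.norm_of_nonneg hz2] at hle
  rw [div_self (one_ne_zero)] at hle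
  calc ‖deriv φ z‖ * (1 - ‖z‖ ^ 2)
      = (1 - ‖a‖ ^ 2) * ((1 - ‖a‖ ^ 2)⁻¹ * (‖deriv φ z‖ * (1 - ‖z‖ ^ 2))) := by
        rw [← mul_assoc, mul_inv_cancel₀ ha2.ne', one_mul]
    _ ≤ (1 - ‖a‖ ^ 2) * 1 := by
        apply mul_le_mul_of_nonneg_left _ ha2.le
        exact hle
    _ = 1 - ‖φ z‖ ^ 2 := by rw [← ha_def]; ring


/-- If `0 < α < 1/2` and `f'/f = (1 - φ)/(z(1 + (1-2α)φ))` for a Schwarz function `φ`,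
then the pre-Schwarzian norm of `f` is at most `4(1-α)/α`. -/
theorem preSchwarzian_norm_bound_via_schwarz
    (α : ℝ) (hα0 : 0 < α) (hα1 : α < 1/2)
    (f : ℂ → ℂ)
    (hf : AnalyticOnNhd ℂ f (Metric.ball (0:ℂ) 1))
    (hf0 : f 0 = 0) (hf'0 : deriv f 0 = 1)
    (hlu : ∀ z : ℂ, ‖z‖ < 1 → deriv f z ≠ 0)
    (hfne : ∀ z : ℂ, ‖z‖ < 1 → z ≠ 0 → f z ≠ 0)
    (hφex : ∃ φ : ℂ → ℂ, AnalyticOnNhd ℂ φ (Metric.ball (0:ℂ) 1) ∧ φ 0 = 0 ∧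
      (∀ z : ℂ, ‖z‖ < 1 → ‖φ z‖ < 1) ∧
      ∀ z : ℂ, ‖z‖ < 1 → z ≠ 0 →
        deriv f z / f z = (1 - φ z) / (z * (1 + (1 - 2 * (α : ℂ)) * φ z))) :
    ∀ z : ℂ, ‖z‖ < 1 →
      (1 - ‖z‖ ^ 2) * ‖deriv (deriv f) z / deriv f z‖ ≤ 4 * (1 - α) / α := by
  obtain ⟨φ, hφan, hφ0, hφlt, heq⟩ := hφex
  have hball : ∀ w : ℂ, ‖w‖ < 1 → w ∈ ball (0:ℂ) 1 := fun w hw => mem_ball_zero_iff.mpr hw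
  have h0ball : (0:ℂ) ∈ ball (0:ℂ) 1 := by simp
  set c : ℂ := 1 - 2*(α:ℂ) with hc_def
  have hcnorm : ‖c‖ = 1 - 2*α := by
    have h : c = ((1 - 2*α : ℝ) : ℂ) := by rw [hc_def]; push_cast; ring
    rw [h, Complex.norm_real, Real.norm_of_nonneg (by linarith)]
  have hφd : ∀ w : ℂ, ‖w‖ < 1 → DifferentiableAt ℂ φ w :=
    fun w hw => (hφan w (hball w hw)).differentiableAt
  -- norms of the two denominators
  have hAnorm : ∀ w : ℂ, ‖w‖ < 1 → 2*α ≤ ‖1 + c * φ w‖ := by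
    intro w hw
    have h1 : (1:ℝ) = ‖(1 + c * φ w) - c * φ w‖ := by norm_num
    have h2 : ‖(1 + c * φ w) - c * φ w‖ ≤ ‖1 + c * φ w‖ + ‖c * φ w‖ := norm_sub_le _ _
    have h3 : ‖c * φ w‖ ≤ 1 - 2*α := by
      rw [norm_mul, hcnorm]
      nlinarith [norm_nonneg (φ w), (hφlt w hw).le, norm_nonneg c]
    linarith
  have hAne : ∀ w : ℂ, ‖w‖ < 1 → (1 + c * φ w) ≠ 0 := by
    intro w hw
    have := hAnorm w hw
    intro h
    rw [h, norm_zero] at this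
    linarith
  have hBnorm : ∀ w : ℂ, ‖w‖ < 1 → 1 - ‖φ w‖ ≤ ‖1 - φ w‖ := by
    intro w hw
    have h1 : (1:ℝ) = ‖(1 - φ w) + φ w‖ := by norm_num
    have h2 : ‖(1 - φ w) + φ w‖ ≤ ‖1 - φ w‖ + ‖φ w‖ := norm_add_le _ _
    linarith
  have hBne : ∀ w : ℂ, ‖w‖ < 1 → (1 - φ w) ≠ 0 := by
    intro w hw
    have h1 := hBnorm w hw
    have h2 := hφlt w hw
    intro h
    rw [h, norm_zero] at h1
    linarith
  set q : ℂ → ℂ := fun w => (1 - φ w) / (1 + c * φ w) with hq_def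
  set Q' : ℂ → ℂ := fun w =>
    (-(deriv φ w) * (1 + c * φ w) - (1 - φ w) * (c * deriv φ w)) / (1 + c * φ w) ^ 2 with hQ'_def
  have hq' : ∀ w : ℂ, ‖w‖ < 1 → HasDerivAt q (Q' w) w := by
    intro w hw
    have hφw := (hφd w hw).hasDerivAt
    exact ((hφw.const_sub 1).div ((hφw.const_mul c).const_add 1) (hAne w hw))
  -- Step A : f w * q w = w * deriv f w on the ball
  have hkey : ∀ w : ℂ, ‖w‖ < 1 → f w * q w = w * deriv f w := by
    intro w hw
    by_cases hw0 : w = 0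
    · subst hw0; simp [hf0]
    · have h := heq w hw hw0
      have hfw := hfne w hw hw0
      have hAw := hAne w hw
      rw [div_eq_div_iff (hfw) (by exact mul_ne_zero hw0 hAw)] at h
      rw [hq_def]
      show f w * ((1 - φ w) / (1 + c * φ w)) = w * deriv f w
      rw [mul_div_assoc', div_eq_iff hAw]
      linear_combination -h
  -- Step B : differentiate the identity
  have hkeyd : ∀ w : ℂ, ‖w‖ < 1 →
      deriv f w * q w + f w * Q' w = deriv f w + w * deriv (deriv f) w := by
    intro w hw
    have h1 : HasDerivAt (fun x => f x * q x) (deriv f w * q w + f w * Q' w) w :=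
      ((hf w (hball w hw)).differentiableAt.hasDerivAt).mul (hq' w hw)
    have h2 : HasDerivAt (fun x => x * deriv f x) (1 * deriv f w + w * deriv (deriv f) w) w :=
      (hasDerivAt_id w).mul ((hf.deriv w (hball w hw)).differentiableAt.hasDerivAt)
    have hev : (fun x => x * deriv f x) =ᶠ[nhds w] (fun x => f x * q x) := by
      filter_upwards [isOpen_ball.mem_nhds (hball w hw)] with x hx
      exact (hkey x (mem_ball_zero_iff.mp hx)).symm
    have h1' : HasDerivAt (fun x => x * deriv f x) (deriv f w * q w + f w * Q' w) w :=
      h1.congr_of_eventuallyEq hev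
    have := h1'.unique h2
    rw [this, one_mul]
  -- the representation function
  set G : ℂ → ℂ := fun w =>
    -(1 + c) * (dslope φ 0 w / (1 + c * φ w) + deriv φ w / ((1 + c * φ w) * (1 - φ w)))
    with hG_def
  -- representation away from 0
  have hrepn : ∀ w : ℂ, ‖w‖ < 1 → w ≠ 0 → deriv (deriv f) w / deriv f w = G w := by
    intro w hw hw0
    have e1 := hkey w hw
    have e2 := hkeyd w hw
    have hds : dslope φ 0 w = φ w / w := by
      rw [dslope_of_ne _ hw0, slope_def_field, hφ0, sub_zero, sub_zero]
    have hAw := hAne w hw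
    have hBw := hBne w hw
    have hfw' := hlu w hw
    simp only [hG_def]
    rw [hds]
    simp only [hq_def, hQ'_def] at e1 e2
    have e1' : f w * (1 - φ w) = w * deriv f w * (1 + c * φ w) := by
      rw [mul_div_assoc', div_eq_iff hAw] at e1; exact e1
    rw [mul_div_assoc', mul_div_assoc', div_add_div _ _ hAw (pow_ne_zero 2 hAw),
      div_eq_iff (mul_ne_zero hAw (pow_ne_zero 2 hAw))] at e2
    rw [div_div, div_add_div _ _ (mul_ne_zero hw0 hAw) (mul_ne_zero hAw hBw), mul_div_assoc',
      div_eq_div_iff hfw' (mul_ne_zero (mul_ne_zero hw0 hAw) (mul_ne_zero hAw hBw))]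
    have e2' : deriv f w * (1 - φ w) * (1 + c * φ w) +
        f w * (-(deriv φ w * (1 + c * φ w)) - (1 - φ w) * (c * deriv φ w)) =
        (deriv f w + w * deriv (deriv f) w) * (1 + c * φ w) ^ 2 :=
      mul_left_cancel₀ hAw (by linear_combination e2)
    linear_combination (-(1 - φ w)) * e2' - (1 + c) * deriv φ w * e1'
  -- representation at 0 by continuity
  have hrep0 : deriv (deriv f) 0 / deriv f 0 = G 0 := by
    have hc1 : ContinuousAt (fun w => deriv (deriv f) w / deriv f w) 0 := by
      refine ContinuousAt.div ?_ ?_ ?_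
      · exact ((hf.deriv.deriv) 0 h0ball).continuousAt
      · exact ((hf.deriv) 0 h0ball).continuousAt
      · rw [hf'0]; exact one_ne_zero
    have hφc0 : ContinuousAt φ 0 := (hφd 0 (by simp)).continuousAt
    have hA0ne : (1 : ℂ) + c * φ 0 ≠ 0 := hAne 0 (by simp)
    have hAB0ne : ((1 : ℂ) + c * φ 0) * (1 - φ 0) ≠ 0 :=
      mul_ne_zero hA0ne (hBne 0 (by simp))
    have hc2 : ContinuousAt G 0 := by
      rw [hG_def]
      refine ContinuousAt.mul continuousAt_const (ContinuousAt.add ?_ ?_)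
      · exact ContinuousAt.div (continuousAt_dslope_same.mpr (hφd 0 (by simp)))
          (continuousAt_const.add (continuousAt_const.mul hφc0)) hA0ne
      · exact ContinuousAt.div ((hφan.deriv 0 h0ball).continuousAt)
          ((continuousAt_const.add (continuousAt_const.mul hφc0)).mul
            (continuousAt_const.sub hφc0)) hAB0ne
    have hev : (fun w => deriv (deriv f) w / deriv f w) =ᶠ[nhdsWithin 0 {(0:ℂ)}ᶜ] G := by
      filter_upwards [self_mem_nhdsWithin,
        mem_nhdsWithin_of_mem_nhds (isOpen_ball.mem_nhds h0ball)] with x hx0 hxb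
      exact hrepn x (mem_ball_zero_iff.mp hxb) hx0
    have t1 : Filter.Tendsto (fun w => deriv (deriv f) w / deriv f w)
        (nhdsWithin 0 {(0:ℂ)}ᶜ) (nhds (deriv (deriv f) 0 / deriv f 0)) :=
      hc1.continuousWithinAt.tendsto
    have t2 : Filter.Tendsto (fun w => deriv (deriv f) w / deriv f w)
        (nhdsWithin 0 {(0:ℂ)}ᶜ) (nhds (G 0)) :=
      (hc2.continuousWithinAt.tendsto).congr' hev.symm
    exact tendsto_nhds_unique t1 t2
  -- the final bound for G
  have hGbound : ∀ w : ℂ, ‖w‖ < 1 → (1 - ‖w‖ ^ 2) * ‖G w‖ ≤ 4 * (1 - α) / α := by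
    intro w hw
    have hds : ‖dslope φ 0 w‖ ≤ 1 := by
      have hmaps : Set.MapsTo φ (ball (0:ℂ) 1) (ball (φ 0) 1) := by
        rw [hφ0]
        intro x hx
        exact mem_ball_zero_iff.mpr (hφlt x (mem_ball_zero_iff.mp hx))
      have := Complex.norm_dslope_le_div_of_mapsTo_ball
        (hφan.differentiableOn) (hmaps.mono_right ball_subset_closedBall) (hball w hw)
      simpa using this
    have hSP : ‖deriv φ w‖ * (1 - ‖w‖ ^ 2) ≤ 1 - ‖φ w‖ ^ 2 :=
      aux_schwarz_pick hφd hφlt hw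
    set t := ‖w‖
    set s := ‖φ w‖ with hs_def
    set D := ‖deriv φ w‖
    set A' := ‖1 + c * φ w‖ with hA'_def
    set B' := ‖1 - φ w‖ with hB'_def
    have hs1 : s < 1 := hφlt w hw
    have hs0 : 0 ≤ s := norm_nonneg _
    have hD0 : 0 ≤ D := norm_nonneg _
    have ht0 : 0 ≤ 1 - t ^ 2 := by nlinarith [norm_nonneg w]
    have ht1 : 1 - t ^ 2 ≤ 1 := by nlinarith [norm_nonneg w]
    have hA0 : 0 < A' := lt_of_lt_of_le (by linarith) (hAnorm w hw)
    have hB0 : 0 < B' := lt_of_lt_of_le (by linarith) (hBnorm w hw)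
    have h1c : ‖-(1 + c)‖ = 2 - 2*α := by
      have h : -(1 + c) = -(((2 - 2*α : ℝ) : ℂ)) := by rw [hc_def]; push_cast; ring
      rw [h, norm_neg, Complex.norm_real, Real.norm_of_nonneg (by linarith)]
    have hGle : ‖G w‖ ≤ (2 - 2*α) * (‖dslope φ 0 w‖ / A' + D / (A' * B')) := by
      simp only [hG_def]
      calc ‖-(1 + c) * (dslope φ 0 w / (1 + c * φ w)
            + deriv φ w / ((1 + c * φ w) * (1 - φ w)))‖
          = (2 - 2*α) * ‖dslope φ 0 w / (1 + c * φ w)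
            + deriv φ w / ((1 + c * φ w) * (1 - φ w))‖ := by rw [norm_mul, h1c]
        _ ≤ (2 - 2*α) * (‖dslope φ 0 w / (1 + c * φ w)‖
            + ‖deriv φ w / ((1 + c * φ w) * (1 - φ w))‖) := by
            apply mul_le_mul_of_nonneg_left (norm_add_le _ _) (by linarith)
        _ = (2 - 2*α) * (‖dslope φ 0 w‖ / A' + D / (A' * B')) := by
            rw [norm_div, norm_div, norm_mul]
    have hterm1 : (1 - t ^ 2) * (‖dslope φ 0 w‖ / A') ≤ 1 / (2*α) := by
      calc (1 - t ^ 2) * (‖dslope φ 0 w‖ / A') ≤ 1 * (‖dslope φ 0 w‖ / A') := by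
            apply mul_le_mul_of_nonneg_right ht1 (by positivity)
        _ = ‖dslope φ 0 w‖ / A' := one_mul _
        _ ≤ 1 / (2*α) := div_le_div₀ (by norm_num) hds (by linarith) (hAnorm w hw)
    have hterm2 : (1 - t ^ 2) * (D / (A' * B')) ≤ 1 / α := by
      have h1 : (1 - t ^ 2) * (D / (A' * B')) = ((1 - t ^ 2) * D) / (A' * B') :=
        mul_div_assoc' _ _ _
      have h2 : ((1 - t ^ 2) * D) / (A' * B') ≤ (1 - s ^ 2) / (2*α * (1 - s)) := by
        apply div_le_div₀ (by nlinarith) (by nlinarith [hSP]) (mul_pos (by linarith) (by linarith))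
        exact mul_le_mul (hAnorm w hw) (hBnorm w hw) (by linarith) (by positivity)
      have h3 : (1 - s ^ 2) / (2*α * (1 - s)) = (1 + s) / (2*α) := by
        rw [show (1:ℝ) - s ^ 2 = (1 + s) * (1 - s) by ring,
          show 2*α * (1 - s) = (2*α) * (1 - s) by ring,
          mul_div_mul_right _ _ (by linarith : (1:ℝ) - s ≠ 0)]
      have h4 : (1 + s) / (2*α) ≤ 2 / (2*α) :=
        div_le_div₀ (by linarith) (by linarith) (by linarith) le_rfl
      have h5 : (2:ℝ) / (2*α) = 1 / α := by field_simp
      calc (1 - t ^ 2) * (D / (A' * B')) = ((1 - t ^ 2) * D) / (A' * B') := h1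
        _ ≤ (1 - s ^ 2) / (2*α * (1 - s)) := h2
        _ = (1 + s) / (2*α) := h3
        _ ≤ 2 / (2*α) := h4
        _ = 1 / α := h5
    calc (1 - t ^ 2) * ‖G w‖
        ≤ (1 - t ^ 2) * ((2 - 2*α) * (‖dslope φ 0 w‖ / A' + D / (A' * B'))) :=
          mul_le_mul_of_nonneg_left hGle ht0
      _ = (2 - 2*α) * ((1 - t ^ 2) * (‖dslope φ 0 w‖ / A')
          + (1 - t ^ 2) * (D / (A' * B'))) := by ring
      _ ≤ (2 - 2*α) * (1 / (2*α) + 1 / α) := by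
          apply mul_le_mul_of_nonneg_left (add_le_add hterm1 hterm2) (by linarith)
      _ = 3 * (1 - α) / α := by field_simp; ring
      _ ≤ 4 * (1 - α) / α :=
          div_le_div₀ (by nlinarith) (by nlinarith) hα0 le_rfl
  -- conclude
  intro z hz
  by_cases hz0 : z = 0
  · subst hz0
    rw [hrep0]
    simpa using hGbound 0 (by simp)
  · rw [hrepn z hz hz0]
    exact hGbound z hz
end AuxPre
end
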